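/- For all natural numbers m ≤ n and q ≥ m, the identity ∑ n!/(λ_1! ⋯ λ_m! (n-λ_1-...-λ_m)!) = binomial(n+m-1, m) holds, where the sum ranges over all nonnegative integer solutions of λ_1 + 2λ_2 + ... + mλ_m = m with λ_1 + ... + λ_m ≤ n. -/

import Mathlib

/-!
Both sides are the coefficient of `X ^ m` in `(1 + X + ⋯ + X ^ m) ^ n`. Expanding by the
multinomial theorem, this coefficient is the sum of `multinomial (k₀, …, kₘ)` over the
compositions `k₀ + ⋯ + kₘ = n` with `∑ j * kⱼ = m`; these are the profiles `λ`, padded by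
`k₀ = n - ∑ λᵢ`. On the other hand `1 + X + ⋯ + X ^ m` agrees with `(1 - X)⁻¹` up to degree `m`,
so the coefficient is that of `X ^ m` in `(1 - X)⁻ⁿ`, namely `choose (n + m - 1) m`.
-/

open Nat Finset PowerSeries

namespace PowerSeries

section CommRing

variable {R : Type*} [CommRing R]

theorem X_pow_dvd_mk_one_sub_sum (N : ℕ) :
    (X : R⟦X⟧) ^ N ∣ PowerSeries.mk 1 - ∑ i ∈ range N, X ^ i := by
  rw [X_pow_dvd_iff]
  intro i hi
  simp [coeff_X_pow, hi]

theorem coeff_pow_eq_of_X_pow_dvd_sub {f g : R⟦X⟧} {N : ℕ}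
    (h : X ^ N ∣ f - g) (k : ℕ) {i : ℕ} (hi : i < N) : coeff i (f ^ k) = coeff i (g ^ k) := by
  have := X_pow_dvd_iff.1 (h.trans (sub_dvd_pow_sub_pow f g k)) i hi
  rwa [map_sub, sub_eq_zero] at this

theorem coeff_mk_one_pow (n m : ℕ) :
    coeff m ((PowerSeries.mk 1 : R⟦X⟧) ^ n) = (n + m - 1).choose m := by
  cases n with
  | zero => cases m <;> simp [coeff_one]
  | succ n => simp [mk_one_pow_eq_mk_choose_add, Nat.choose_symm_add]

end CommRing

theorem coeff_sum_X_pow_pow {ι R : Type*} [Fintype ι] [DecidableEq ι] [CommSemiring R]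
    (e : ι → ℕ) (n m : ℕ) :
    coeff m ((∑ i, (X : R⟦X⟧) ^ e i) ^ n) =
      ∑ k ∈ (piAntidiag univ n).filter (fun k => ∑ i, e i * k i = m), (multinomial univ k : R) := by
  rw [sum_pow_eq_sum_piAntidiag, map_sum, sum_filter]
  refine sum_congr rfl fun k _ => ?_
  simp_rw [← pow_mul, prod_pow_eq_pow_sum]
  rw [← map_natCast (C (R := R)), coeff_C_mul_X_pow]
  exact if_congr eq_comm rfl rfl

end PowerSeries

theorem sum_multinomial_eq_choose (n m N : ℕ) (hm : m < N) :
    ∑ k ∈ (piAntidiag (univ : Finset (Fin N)) n).filter (fun k => ∑ j : Fin N, (j : ℕ) * k j = m),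
      multinomial univ k = (n + m - 1).choose m := by
  apply Nat.cast_injective (R := ℤ)
  push_cast
  rw [← coeff_sum_X_pow_pow, ← coeff_mk_one_pow, Fin.sum_univ_eq_sum_range (fun i => X ^ i)]
  exact (coeff_pow_eq_of_X_pow_dvd_sub (X_pow_dvd_mk_one_sub_sum N) n hm).symm

theorem multinomial_univ_cons {m : ℕ} (a : ℕ) (f : Fin m → ℕ) :
    multinomial univ (Fin.cons a f : Fin (m + 1) → ℕ) = (a + ∑ i, f i)! / (a ! * ∏ i, (f i)!) := by
  simp [Nat.multinomial, Fin.sum_univ_succ, Fin.prod_univ_succ]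

theorem sum_profiles_eq_sum_multinomial (n m : ℕ) :
    ∑ lam ∈ (Fintype.piFinset fun _ : Fin m => range (m + 1)).filter
        (fun lam => ∑ i, (i.1 + 1) * lam i = m ∧ ∑ i, lam i ≤ n),
      n ! / ((∏ i, (lam i)!) * (n - ∑ i, lam i)!) =
    ∑ k ∈ (piAntidiag (univ : Finset (Fin (m + 1))) n).filter
        (fun k => ∑ j : Fin (m + 1), (j : ℕ) * k j = m),
      multinomial univ k := by
  refine sum_nbij' (fun lam => Fin.cons (n - ∑ i, lam i) lam) Fin.tail ?_ ?_ ?_ ?_ ?_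
  · intro lam hlam
    simp only [mem_filter, Fintype.mem_piFinset, mem_range, mem_piAntidiag] at hlam ⊢
    simp only [Fin.sum_univ_succ, Fin.cons_zero, Fin.cons_succ, Fin.val_zero, Fin.val_succ,
      zero_mul, zero_add, mem_univ, implies_true, and_true]
    exact ⟨Nat.sub_add_cancel hlam.2.2, hlam.2.1⟩
  · intro k hk
    simp only [mem_filter, mem_piAntidiag, Fin.sum_univ_succ (f := k),
      Fin.sum_univ_succ (f := fun j => (j : ℕ) * k j), Fin.val_zero, Fin.val_succ, zero_mul,
      zero_add] at hk
    obtain ⟨⟨hsum, -⟩, hweight⟩ := hk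
    rw [mem_filter, Fintype.mem_piFinset]
    refine ⟨fun i => mem_range.2 (Nat.lt_succ_of_le ?_), hweight, by simp only [Fin.tail]; omega⟩
    calc Fin.tail k i ≤ (i.1 + 1) * k i.succ := Nat.le_mul_of_pos_left _ i.1.succ_pos
      _ ≤ m := (single_le_sum (f := fun j : Fin m => (j.1 + 1) * k j.succ)
          (fun j _ => Nat.zero_le _) (mem_univ i)).trans hweight.le
  · exact fun lam _ => Fin.tail_cons _ _
  · intro k hk
    simp only [mem_filter, mem_piAntidiag, Fin.sum_univ_succ (f := k)] at hk
    conv_rhs => rw [← Fin.cons_self_tail k]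
    congr 1
    simp only [Fin.tail]
    omega
  · intro lam hlam
    rw [multinomial_univ_cons, Nat.sub_add_cancel (mem_filter.1 hlam).2.2, mul_comm]

theorem multinomial_sum_identity_general (n m : ℕ) :
    ∑ lam ∈ (Fintype.piFinset fun _ : Fin m => Finset.range (m + 1)).filter
        (fun lam => ∑ i, (i.1 + 1) * lam i = m ∧ ∑ i, lam i ≤ n),
      n ! / ((∏ i, (lam i)!) * (n - ∑ i, lam i)!) =
    Nat.choose (n + m - 1) m := by
  rw [sum_profiles_eq_sum_multinomial, sum_multinomial_eq_choose n m (m + 1) m.lt_succ_self]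

/-- For `m ≤ n` and `q ≥ m`, the sum of multinomial coefficients over all nonnegative
solutions of `λ₁ + 2λ₂ + … + mλₘ = m` with `λ₁ + … + λₘ ≤ n` equals `binomial (n+m-1) m`. -/
theorem multinomial_sum_identity (n m q : ℕ) (hmn : m ≤ n) (hq : m ≤ q) :
    ∑ lam ∈ (Fintype.piFinset fun _ : Fin m => Finset.range (m + 1)).filter
        (fun lam => ∑ i, (i.1 + 1) * lam i = m ∧ ∑ i, lam i ≤ n),
      n ! / ((∏ i, (lam i)!) * (n - ∑ i, lam i)!) =
    Nat.choose (n + m - 1) m :=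
  multinomial_sum_identity_general n m
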